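/- arXiv:0801.0929 — 2 statements merged into one kernel-verified Lean document; each statement's English description precedes it below -/
import Mathlib

section
/- Let K be a field, let A be a configuration in K[t_1,…,t_d], and for each i = 1,…,d let B_i = {m_1^{(i)},…,m_{λ_i}^{(i)}} be a configuration in a polynomial ring K[u^{(i)}] in μ_i variables, where the variable sets u^{(1)},…,u^{(d)} are pairwise disjoint. For each monomial M of the nested configuration A(B_1,…,B_d) fix one expression M = m_{j_1}^{(i_1)}⋯m_{j_r}^{(i_r)} with t_{i_1}⋯t_{i_r} ∈ A, and for each j = 1,…,d let φ_j : K[x_M : M ∈ A(B_1,…,B_d)] → K[z_1^{(j)},…,z_{λ_j}^{(j)}] be the K-algebra homomorphism sending x_M to ∏_{k : i_k = j} z_{j_k}^{(j)}. Then a binomial f in K[x_M : M ∈ A(B_1,…,B_d)] belongs to the toric ideal I_{A(B_1,…,B_d)} if and only if φ_j(f) belongs to the toric ideal I_{B_j} for every j = 1,…,d. -/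
open MvPolynomial

/-- Total degree of an exponent vector. -/
def expDeg {σ : Type*} (a : σ →₀ ℕ) : ℕ := a.sum fun _ e => e

/-- A set of monomials (given by exponent vectors) is a configuration if some nonnegative
weight vector gives every member weight `1`. -/
def IsConfig {σ : Type*} (A : Set (σ →₀ ℕ)) : Prop :=
  ∃ w : σ → ℝ, (∀ i, 0 ≤ w i) ∧ ∀ a ∈ A, (a.sum fun i e => w i * (e : ℝ)) = 1

/-- The `K`-algebra homomorphism sending the variable indexed by `s` to the monomial with
exponent vector `v s`. -/
noncomputable def toricHom (K : Type*) [Field K] {σ τ : Type*} (v : σ → (τ →₀ ℕ)) :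
    MvPolynomial σ K →ₐ[K] MvPolynomial τ K :=
  MvPolynomial.aeval fun s => MvPolynomial.monomial (v s) (1 : K)

/-- The toric ideal of a family of monomials (given by exponent vectors). -/
noncomputable def toricIdeal (K : Type*) [Field K] {σ τ : Type*} (v : σ → (τ →₀ ℕ)) :
    Ideal (MvPolynomial σ K) :=
  RingHom.ker (toricHom K v)

/-- `r` is a monomial order: a linear order, compatible with addition, with `0` least. -/
def IsMonomialOrder {σ : Type*} (r : (σ →₀ ℕ) → (σ →₀ ℕ) → Prop) : Prop :=
  IsLinearOrder (σ →₀ ℕ) r ∧ (∀ a, r 0 a) ∧ ∀ a b c, r a b → r (a + c) (b + c)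

/-- `m` is the leading monomial (exponent) of `f` with respect to the monomial order `r`. -/
def IsLeadingMonomial {σ K : Type*} [CommSemiring K]
    (r : (σ →₀ ℕ) → (σ →₀ ℕ) → Prop) (f : MvPolynomial σ K) (m : σ →₀ ℕ) : Prop :=
  m ∈ f.support ∧ ∀ m' ∈ f.support, r m' m

/-- `G` is a Gröbner basis of `I` w.r.t. `r`: `G ⊆ I` and the leading monomial of every
nonzero element of `I` is divisible by the leading monomial of some element of `G`. -/
def IsGroebnerBasis {σ K : Type*} [Field K] (r : (σ →₀ ℕ) → (σ →₀ ℕ) → Prop)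
    (I : Ideal (MvPolynomial σ K)) (G : Set (MvPolynomial σ K)) : Prop :=
  (∀ g ∈ G, g ∈ I) ∧
  ∀ f ∈ I, f ≠ 0 → ∀ mf, IsLeadingMonomial r f mf →
    ∃ g ∈ G, ∃ mg, IsLeadingMonomial r g mg ∧ mg ≤ mf

/-- `G` is the reduced Gröbner basis: a Gröbner basis, leading coefficients `1`, and no
monomial of an element is divisible by the leading monomial of another element. -/
def IsReducedGroebnerBasis {σ K : Type*} [Field K] (r : (σ →₀ ℕ) → (σ →₀ ℕ) → Prop)
    (I : Ideal (MvPolynomial σ K)) (G : Set (MvPolynomial σ K)) : Prop :=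
  IsGroebnerBasis r I G ∧
  (∀ g ∈ G, ∀ m, IsLeadingMonomial r g m → MvPolynomial.coeff m g = 1) ∧
  ∀ g ∈ G, ∀ g' ∈ G, g' ≠ g → ∀ m ∈ g.support, ∀ m', IsLeadingMonomial r g' m' → ¬ m' ≤ m

/-- A homogeneous binomial of degree 2, i.e. a difference of two distinct quadratic monomials. -/
def IsQuadBinomial {σ K : Type*} [CommRing K] (f : MvPolynomial σ K) : Prop :=
  ∃ a b : σ →₀ ℕ, a ≠ b ∧ expDeg a = 2 ∧ expDeg b = 2 ∧
    f = MvPolynomial.monomial a (1 : K) - MvPolynomial.monomial b (1 : K)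

/-- `I` possesses a quadratic Gröbner basis. -/
def HasQuadraticGB {σ K : Type*} [Field K] (I : Ideal (MvPolynomial σ K)) : Prop :=
  ∃ r, IsMonomialOrder r ∧ ∃ G, (∀ g ∈ G, IsQuadBinomial g) ∧ IsGroebnerBasis r I G

/-- The initial ideal of `I` w.r.t. `r`: ideal generated by the leading monomials of the
nonzero elements of `I`. -/
noncomputable def initialIdeal {σ K : Type*} [Field K] (r : (σ →₀ ℕ) → (σ →₀ ℕ) → Prop)
    (I : Ideal (MvPolynomial σ K)) : Ideal (MvPolynomial σ K) :=
  Ideal.span {p | ∃ f ∈ I, f ≠ 0 ∧ ∃ m, IsLeadingMonomial r f m ∧ p = MvPolynomial.monomial m (1 : K)}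

/-- A squarefree exponent vector. -/
def SquarefreeExp {σ : Type*} (m : σ →₀ ℕ) : Prop := ∀ i, m i ≤ 1

/-- The nested configuration `A(B_1, …, B_d)`. -/
def NestedConfig {d : ℕ} {lam mu : Fin d → ℕ} (A : Set (Fin d →₀ ℕ))
    (B : (i : Fin d) → Fin (lam i) → (Fin (mu i) →₀ ℕ)) :
    Set ((Σ i : Fin d, Fin (mu i)) →₀ ℕ) :=
  { M | ∃ n : ℕ, 1 ≤ n ∧ ∃ s : Fin n → Σ i : Fin d, Fin (lam i),
      (∑ k, Finsupp.single (s k).1 1) ∈ A ∧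
      M = ∑ k, Finsupp.mapDomain (Sigma.mk (s k).1) (B (s k).1 (s k).2) }

/-- The exponent vector of `φ_j(x_M)` determined by the chosen standard expressions. -/
noncomputable def phiExp {d : ℕ} {lam mu : Fin d → ℕ} {A : Set (Fin d →₀ ℕ)}
    {B : (i : Fin d) → Fin (lam i) → (Fin (mu i) →₀ ℕ)}
    (n : ↥(NestedConfig A B) → ℕ)
    (s : (M : ↥(NestedConfig A B)) → Fin (n M) → Σ i : Fin d, Fin (lam i))
    (j : Fin d) (M : ↥(NestedConfig A B)) : Fin (lam j) →₀ ℕ :=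
  ∑ k : Fin (n M), if h : (s M k).1 = j
    then Finsupp.single (Fin.cast (congrArg lam h) (s M k).2) 1 else 0

/-!
The monomials of `A(B_1, …, B_d)` live in the disjoint union of the variable blocks `u^{(j)}`,
and the block-`j` part of `M` is `π_j(φ_j(x_M))`: the factors of the fixed expression of `M`
that come from `B_j` are exactly the ones `φ_j` records. Hence `π(x^a) = π(x^b)` holds iff
`π_j(φ_j(x^a)) = π_j(φ_j(x^b))` for every block `j`, and for monomials with coefficient `1`
these equalities are membership of the binomials in the toric ideals.
-/

lemma toricHom_monomial_one {K : Type*} [Field K] {σ τ : Type*} (v : σ → (τ →₀ ℕ))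
    (c : σ →₀ ℕ) :
    toricHom K v (monomial c (1 : K)) = monomial (Finsupp.linearCombination ℕ v c) (1 : K) := by
  rw [toricHom, aeval_monomial, Finsupp.linearCombination_apply, monomial_finsupp_sum_index]
  simp [monomial_pow]

lemma toricHom_monomial_sub_monomial {K : Type*} [Field K] {σ τ : Type*}
    (v : σ → (τ →₀ ℕ)) (a b : σ →₀ ℕ) :
    toricHom K v (monomial a (1 : K) - monomial b (1 : K)) =
      monomial (Finsupp.linearCombination ℕ v a) (1 : K) -
        monomial (Finsupp.linearCombination ℕ v b) (1 : K) := by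
  rw [map_sub, toricHom_monomial_one, toricHom_monomial_one]

lemma monomial_sub_monomial_mem_toricIdeal_iff {K : Type*} [Field K] {σ τ : Type*}
    (v : σ → (τ →₀ ℕ)) (a b : σ →₀ ℕ) :
    monomial a (1 : K) - monomial b (1 : K) ∈ toricIdeal K v ↔
      Finsupp.linearCombination ℕ v a = Finsupp.linearCombination ℕ v b := by
  rw [toricIdeal, RingHom.mem_ker, toricHom_monomial_sub_monomial, sub_eq_zero,
    monomial_eq_monomial_iff]
  simp

namespace Finsupp

variable {ι M : Type*} {κ : ι → Type*}

lemma ext_iff_split [Zero M] {l l' : (Σ i, κ i) →₀ M} :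
    l = l' ↔ ∀ i, l.split i = l'.split i := by
  refine ⟨fun h _ => h ▸ rfl, fun h => ext fun ⟨i, x⟩ => ?_⟩
  rw [← split_apply, ← split_apply, h]

lemma split_eq_lcomapDomain (R : Type*) [Semiring R] [AddCommMonoid M] [Module R M]
    (l : (Σ i, κ i) →₀ M) (i : ι) :
    l.split i = lcomapDomain (R := R) (Sigma.mk i) sigma_mk_injective l :=
  rfl

lemma split_linearCombination {R σ : Type*} [Semiring R] [AddCommMonoid M] [Module R M]
    (v : σ → (Σ i, κ i) →₀ M) (c : σ →₀ R) (i : ι) :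
    (linearCombination R v c).split i = linearCombination R (fun s => (v s).split i) c :=
  apply_linearCombination R (lcomapDomain (Sigma.mk i) sigma_mk_injective) v c

end Finsupp

section NestedConfig

variable {d : ℕ} {lam mu : Fin d → ℕ} {A : Set (Fin d →₀ ℕ)}
  {B : (i : Fin d) → Fin (lam i) → (Fin (mu i) →₀ ℕ)}

lemma split_mapDomain_sigma_mk (p : Σ i, Fin (lam i)) (j : Fin d) :
    (Finsupp.mapDomain (Sigma.mk p.1) (B p.1 p.2) : (Σ i, Fin (mu i)) →₀ ℕ).split j =
      Finsupp.linearCombination ℕ (B j)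
        (if h : p.1 = j then Finsupp.single (Fin.cast (congrArg lam h) p.2) 1 else 0) := by
  obtain ⟨i, k⟩ := p
  ext x
  rw [Finsupp.split_apply]
  by_cases h : i = j
  · subst h
    simp [Finsupp.mapDomain_apply sigma_mk_injective]
  · rw [dif_neg h, map_zero, Finsupp.coe_zero, Pi.zero_apply]
    exact Finsupp.mapDomain_of_notMem_range _ _ fun ⟨_, hx⟩ => h (congrArg Sigma.fst hx)

lemma split_eq_linearCombination_phiExp (n : ↥(NestedConfig A B) → ℕ)
    (s : (M : ↥(NestedConfig A B)) → Fin (n M) → Σ i : Fin d, Fin (lam i))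
    (M : ↥(NestedConfig A B))
    (hsM : (M : (Σ i : Fin d, Fin (mu i)) →₀ ℕ) =
      ∑ k, Finsupp.mapDomain (Sigma.mk (s M k).1) (B (s M k).1 (s M k).2))
    (j : Fin d) :
    (M : (Σ i : Fin d, Fin (mu i)) →₀ ℕ).split j =
      Finsupp.linearCombination ℕ (B j) (phiExp n s j M) := by
  rw [hsM, phiExp, Finsupp.split_eq_lcomapDomain ℕ, map_sum, map_sum]
  exact Finset.sum_congr rfl fun k _ => split_mapDomain_sigma_mk (s M k) j

end NestedConfig

theorem binomial_mem_nested_toricIdeal_iff_general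
    {K : Type*} [Field K] {d : ℕ} {lam mu : Fin d → ℕ}
    (A : Finset (Fin d →₀ ℕ))
    (B : (i : Fin d) → Fin (lam i) → (Fin (mu i) →₀ ℕ))
    -- a fixed expression `M = m_{j_1}^{(i_1)} ⋯ m_{j_r}^{(i_r)}` for each `M ∈ A(B_1,…,B_d)`
    (n : ↥(NestedConfig (↑A : Set (Fin d →₀ ℕ)) B) → ℕ)
    (s : (M : ↥(NestedConfig (↑A : Set (Fin d →₀ ℕ)) B)) → Fin (n M) → Σ i : Fin d, Fin (lam i))
    (hsM : ∀ M : ↥(NestedConfig (↑A : Set (Fin d →₀ ℕ)) B),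
      (M : (Σ i : Fin d, Fin (mu i)) →₀ ℕ) =
        ∑ k, Finsupp.mapDomain (Sigma.mk (s M k).1) (B (s M k).1 (s M k).2))
    -- a binomial `f`
    (f : MvPolynomial (↥(NestedConfig (↑A : Set (Fin d →₀ ℕ)) B)) K)
    (a b : (↥(NestedConfig (↑A : Set (Fin d →₀ ℕ)) B)) →₀ ℕ)
    (hf : f = MvPolynomial.monomial a (1 : K) - MvPolynomial.monomial b (1 : K)) :
    f ∈ toricIdeal K (fun M : ↥(NestedConfig (↑A : Set (Fin d →₀ ℕ)) B) =>
        (M : (Σ i : Fin d, Fin (mu i)) →₀ ℕ)) ↔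
      ∀ j : Fin d, toricHom K (phiExp n s j) f ∈ toricIdeal K (B j) := by
  subst hf
  rw [monomial_sub_monomial_mem_toricIdeal_iff, Finsupp.ext_iff_split]
  refine forall_congr' fun j => ?_
  simp only [Finsupp.split_linearCombination, toricHom_monomial_sub_monomial,
    monomial_sub_monomial_mem_toricIdeal_iff, Finsupp.linearCombination_linearCombination,
    split_eq_linearCombination_phiExp n s _ (hsM _)]

/-- Lemma `keylemma`, equivalence part: a binomial `f` lies in the toric
ideal of the nested configuration `A(B_1,…,B_d)` iff `φ_j(f)` lies in `I_{B_j}` for all `j`. -/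
theorem binomial_mem_nested_toricIdeal_iff
    {K : Type*} [Field K] {d : ℕ} {lam mu : Fin d → ℕ}
    (A : Finset (Fin d →₀ ℕ))
    (B : (i : Fin d) → Fin (lam i) → (Fin (mu i) →₀ ℕ))
    (hA : IsConfig (↑A : Set (Fin d →₀ ℕ)))
    (hB : ∀ i, IsConfig (Set.range (B i)))
    -- a fixed expression `M = m_{j_1}^{(i_1)} ⋯ m_{j_r}^{(i_r)}` for each `M ∈ A(B_1,…,B_d)`
    (n : ↥(NestedConfig (↑A : Set (Fin d →₀ ℕ)) B) → ℕ)
    (s : (M : ↥(NestedConfig (↑A : Set (Fin d →₀ ℕ)) B)) → Fin (n M) → Σ i : Fin d, Fin (lam i))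
    (hn : ∀ M, 1 ≤ n M)
    (hsA : ∀ M, (∑ k, Finsupp.single (s M k).1 1) ∈ A)
    (hsM : ∀ M : ↥(NestedConfig (↑A : Set (Fin d →₀ ℕ)) B),
      (M : (Σ i : Fin d, Fin (mu i)) →₀ ℕ) =
        ∑ k, Finsupp.mapDomain (Sigma.mk (s M k).1) (B (s M k).1 (s M k).2))
    -- a binomial `f`
    (f : MvPolynomial (↥(NestedConfig (↑A : Set (Fin d →₀ ℕ)) B)) K)
    (a b : (↥(NestedConfig (↑A : Set (Fin d →₀ ℕ)) B)) →₀ ℕ)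
    (hf : f = MvPolynomial.monomial a (1 : K) - MvPolynomial.monomial b (1 : K)) :
    f ∈ toricIdeal K (fun M : ↥(NestedConfig (↑A : Set (Fin d →₀ ℕ)) B) =>
        (M : (Σ i : Fin d, Fin (mu i)) →₀ ℕ)) ↔
      ∀ j : Fin d, toricHom K (phiExp n s j) f ∈ toricIdeal K (B j) :=
  binomial_mem_nested_toricIdeal_iff_general A B n s hsM f a b hf
end

section
/- Let K be a field and let 𝒜 be a configuration of Segre–Veronese type in K[t_1,…,t_d] with data τ ≥ 2, b = (b_1,…,b_n), c = (c_1,…,c_n), p = (p_1,…,p_n), q = (q_1,…,q_n). Let G be the set of all binomials x_{ℓ_1ℓ_2⋯ℓ_τ} x_{m_1m_2⋯m_τ} − x_{n_1n_3⋯n_{2τ−1}} x_{n_2n_4⋯n_{2τ}} in K[X], where n_1n_2⋯n_{2τ} = sort(ℓ_1m_1ℓ_2m_2⋯ℓ_τm_τ). Then there exists a monomial order on K[X] such that G is the reduced Gröbner basis of the toric ideal I_𝒜, and the initial ideal of I_𝒜 is generated by squarefree quadratic (nonsorted) monomials. -/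
open MvPolynomial

/-- The Segre–Veronese configuration: monomials of total degree `τ` whose partial degrees
on the intervals `[p i, q i]` lie between `c i` and `b i`. -/
def SVConfig (d τ n : ℕ) (b c : Fin n → ℕ) (p q : Fin n → Fin d) : Set (Fin d →₀ ℕ) :=
  { f | expDeg f = τ ∧
      ∀ i, c i ≤ (∑ j ∈ Finset.Icc (p i) (q i), f j) ∧
        (∑ j ∈ Finset.Icc (p i) (q i), f j) ≤ b i }

/-- Index type for the variables `x_{j_1 ⋯ j_τ}` of `K[X]`: weakly increasing tuples whose
associated monomial belongs to the Segre–Veronese configuration. -/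
abbrev SVIdx (d τ n : ℕ) (b c : Fin n → ℕ) (p q : Fin n → Fin d) : Type :=
  { j : Fin τ → Fin d // Monotone j ∧ (∑ k, Finsupp.single (j k) 1) ∈ SVConfig d τ n b c p q }

/-- The odd-position subsequence `n_1 n_3 ⋯ n_{2τ-1}` of a `2τ`-tuple. -/
def oddPart {α : Type*} {τ : ℕ} (nn : Fin (2 * τ) → α) : Fin τ → α :=
  fun k => nn ⟨2 * k.1, by have := k.isLt; omega⟩

/-- The even-position subsequence `n_2 n_4 ⋯ n_{2τ}` of a `2τ`-tuple. -/
def evenPart {α : Type*} {τ : ℕ} (nn : Fin (2 * τ) → α) : Fin τ → α :=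
  fun k => nn ⟨2 * k.1 + 1, by have := k.isLt; omega⟩

/-- The pair of weakly increasing tuples `l, m` is sorted:
`l_1 ≤ m_1 ≤ l_2 ≤ m_2 ≤ ⋯ ≤ l_τ ≤ m_τ`. -/
def PairSorted {τ d : ℕ} (l m : Fin τ → Fin d) : Prop :=
  (∀ k, l k ≤ m k) ∧ ∀ (k : Fin τ) (h : k.1 + 1 < τ), m k ≤ l ⟨k.1 + 1, h⟩

/-- The set `G` of sorting binomials
`x_{ℓ_1⋯ℓ_τ} x_{m_1⋯m_τ} − x_{n_1n_3⋯n_{2τ−1}} x_{n_2n_4⋯n_{2τ}}`,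
where `n_1 n_2 ⋯ n_{2τ} = sort(ℓ_1 m_1 ℓ_2 m_2 ⋯ ℓ_τ m_τ)`. -/
def sortingSet (K : Type*) [Field K] (d τ n : ℕ) (b c : Fin n → ℕ) (p q : Fin n → Fin d) :
    Set (MvPolynomial (SVIdx d τ n b c p q) K) :=
  { f | ∃ l m : SVIdx d τ n b c p q, ∃ nn : Fin (2 * τ) → Fin d, Monotone nn ∧
      (∑ k, Finsupp.single (nn k) 1) =
        (∑ k, Finsupp.single (l.1 k) 1) + (∑ k, Finsupp.single (m.1 k) 1) ∧
      ∃ (h1 : Monotone (oddPart nn) ∧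
          (∑ k, Finsupp.single (oddPart nn k) 1) ∈ SVConfig d τ n b c p q)
        (h2 : Monotone (evenPart nn) ∧
          (∑ k, Finsupp.single (evenPart nn k) 1) ∈ SVConfig d τ n b c p q),
        f = MvPolynomial.X l * MvPolynomial.X m -
            MvPolynomial.X (⟨oddPart nn, h1⟩ : SVIdx d τ n b c p q) *
            MvPolynomial.X (⟨evenPart nn, h2⟩ : SVIdx d τ n b c p q) }

/-!
Encode a weakly increasing chain `j : Fin T → Fin d` by its counts `#{k | j k < t}`. Sorting a
pair of chains (merging them and splitting the result into odd and even positions) replaces the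
counts `x, y` of the pair by `⌈(x + y) / 2⌉, ⌊(x + y) / 2⌋`; since every Segre–Veronese constraint
bounds a difference of two counts, the sorted chains stay in the configuration. Sorting an
unsorted pair strictly lowers its total weight, a chain with counts `x` weighing
`(2C + 1) ∑ₜ xₜ² + (C - (∑ₜ xₜ)²)`. A sorted monomial is determined by its image under `π`,
because the counts of its top chain are the rounded-down averages of the counts of its chains; so
each fibre of `π` contains exactly one sorted monomial, and it has the least weight there. Hence,
for the weight order refined lexicographically, the leading monomial of any element of `I_𝒜` is
unsorted, so it is divisible by an unsorted product `x_ℓ x_m`, the leading monomial of a sorting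
binomial.
-/

namespace SegreVeronese

open Finset MvPolynomial

section PairMonomials

variable {σ : Type*}

lemma single_add_single_le_of_mem_support {j j' : σ} (hne : j ≠ j') {a : σ →₀ ℕ}
    (hj : j ∈ a.support) (hj' : j' ∈ a.support) :
    Finsupp.single j 1 + Finsupp.single j' 1 ≤ a := by
  classical
  intro x
  simp only [Finsupp.coe_add, Pi.add_apply, Finsupp.single_apply]
  rw [Finsupp.mem_support_iff] at hj hj'
  split_ifs with h1 h2 <;> subst_vars <;> first | exact absurd rfl hne | omega

lemma single_add_single_eq_iff {l m l' m' : σ} :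
    Finsupp.single l (1 : ℕ) + Finsupp.single m 1 =
        Finsupp.single l' 1 + Finsupp.single m' 1 ↔
      (l = l' ∧ m = m') ∨ (l = m' ∧ m = l') := by
  rw [Finsupp.single_add_single_eq_single_add_single one_ne_zero one_ne_zero]
  simp

lemma single_add_single_le_iff {l m l' m' : σ} :
    Finsupp.single l (1 : ℕ) + Finsupp.single m 1 ≤
        Finsupp.single l' 1 + Finsupp.single m' 1 ↔
      (l = l' ∧ m = m') ∨ (l = m' ∧ m = l') := by
  rw [← single_add_single_eq_iff]
  refine ⟨fun hle => ?_, fun h => h.le⟩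
  obtain ⟨k, hk⟩ := exists_add_of_le hle
  have := congrArg Finsupp.degree hk
  simp only [map_add, Finsupp.degree_single, left_eq_add, Finsupp.degree_eq_zero_iff] at this
  simpa [this] using hk.symm

end PairMonomials

section WeightOrder

variable {σ : Type*} [LinearOrder σ]

def weightLex (w : σ → ℕ) (a b : σ →₀ ℕ) : Prop :=
  toLex (Finsupp.weight w a, toLex a) ≤ toLex (Finsupp.weight w b, toLex b)

lemma isMonomialOrder_weightLex (w : σ → ℕ) : IsMonomialOrder (weightLex w) := by
  let key : (σ →₀ ℕ) →+ ℕ ×ₗ Lex (σ →₀ ℕ) :=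
    { toFun a := toLex (Finsupp.weight w a, toLex a)
      map_zero' := by simp
      map_add' a b := by rw [map_add]; rfl }
  have hkey : Function.Injective key := fun a b h => toLex_inj.1 (Prod.ext_iff.1 h).2
  refine ⟨(RelEmbedding.mk ⟨key, hkey⟩ Iff.rfl).isLinearOrder, fun a => ?_,
    fun a b c h => ?_⟩
  · exact Prod.Lex.toLex_mono ⟨Nat.zero_le _, Finsupp.toLex_monotone (zero_le (a := a))⟩
  · show key (a + c) ≤ key (b + c)
    rw [map_add, map_add]
    exact add_le_add_left h _

lemma weight_le_of_weightLex {w : σ → ℕ} {a b : σ →₀ ℕ} (h : weightLex w a b) :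
    Finsupp.weight w a ≤ Finsupp.weight w b :=
  (Prod.Lex.toLex_le_toLex.1 h).elim le_of_lt fun h => h.1.le

end WeightOrder

section Groebner

variable {σ K : Type*} [Field K] {r : (σ →₀ ℕ) → (σ →₀ ℕ) → Prop}

lemma IsGroebnerBasis.initialIdeal_eq_span {I : Ideal (MvPolynomial σ K)}
    {G : Set (MvPolynomial σ K)} (hG : IsGroebnerBasis r I G) :
    initialIdeal r I =
      Ideal.span {p | ∃ g ∈ G, ∃ m, IsLeadingMonomial r g m ∧ p = monomial m 1} := by
  apply le_antisymm
  · refine Ideal.span_le.2 ?_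
    rintro _ ⟨f, hf, hf0, mf, hmf, rfl⟩
    obtain ⟨g, hg, mg, hmg, hle⟩ := hG.2 f hf hf0 mf hmf
    have hsplit : monomial mf (1 : K) = monomial mg 1 * monomial (mf - mg) 1 := by
      rw [monomial_mul, one_mul, add_tsub_cancel_of_le hle]
    rw [hsplit]
    exact Ideal.mul_mem_right _ _ (Ideal.subset_span ⟨g, hg, mg, hmg, rfl⟩)
  · exact Ideal.span_mono fun p ⟨g, hg, m, hm, hp⟩ =>
      ⟨g, hG.1 g hg, fun h0 => by simp [h0, IsLeadingMonomial] at hm, m, hm, hp⟩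

lemma mem_support_monomial_sub_monomial {e e' : σ →₀ ℕ} (h : e ≠ e') {m : σ →₀ ℕ} :
    m ∈ (monomial e (1 : K) - monomial e' 1).support ↔ m = e ∨ m = e' := by
  classical
  by_cases hm : m = e
  · simp [hm, coeff_monomial, h.symm]
  · by_cases hm' : m = e'
    · simp [hm', coeff_monomial, h]
    · simp [coeff_monomial, Ne.symm hm, Ne.symm hm', hm, hm']

lemma eq_or_eq_of_mem_support_monomial_sub_monomial {e e' m : σ →₀ ℕ}
    (hm : m ∈ (monomial e (1 : K) - monomial e' 1).support) : m = e ∨ m = e' := by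
  classical
  by_contra! h
  simp [coeff_monomial, Ne.symm h.1, Ne.symm h.2] at hm

lemma coeff_of_isLeadingMonomial_monomial_sub_monomial {e e' : σ →₀ ℕ}
    (h : IsLeadingMonomial r (monomial e (1 : K) - monomial e' 1) e) :
    coeff e (monomial e (1 : K) - monomial e' 1) = 1 := by
  classical
  have hne : e' ≠ e := by rintro rfl; simp [IsLeadingMonomial] at h
  rw [coeff_sub, coeff_monomial, coeff_monomial, if_pos rfl, if_neg hne, sub_zero]

lemma X_mul_X (i j : σ) :
    (X i * X j : MvPolynomial σ K) = monomial (Finsupp.single i 1 + Finsupp.single j 1) 1 := by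
  rw [X, X, monomial_mul, one_mul]

variable [Std.Total r] {w : σ → ℕ}

lemma isLeadingMonomial_monomial_sub_monomial
    (hr : ∀ a b, r a b → Finsupp.weight w a ≤ Finsupp.weight w b) {e e' : σ →₀ ℕ}
    (h : Finsupp.weight w e' < Finsupp.weight w e) (m : σ →₀ ℕ) :
    IsLeadingMonomial r (monomial e (1 : K) - monomial e' 1) m ↔ m = e := by
  have hne : e ≠ e' := fun he => (he ▸ h).false
  have hlead : ∀ m, m = e ∨ m = e' → r m e := by
    rintro m (rfl | rfl)
    · exact (Std.Total.total m m).elim id id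
    · exact (Std.Total.total m e).resolve_right fun h' => (hr _ _ h').not_gt h
  simp only [IsLeadingMonomial, mem_support_monomial_sub_monomial hne]
  refine ⟨fun ⟨hm, hmax⟩ => hm.resolve_right ?_, fun hm => ⟨Or.inl hm, hm ▸ hlead⟩⟩
  rintro rfl
  exact (hr _ _ (hmax e (Or.inl rfl))).not_gt h

end Groebner

section Toric

variable {K : Type*} [Field K] {σ X : Type*} (v : σ → (X →₀ ℕ))

lemma toricHom_monomial (a : σ →₀ ℕ) (k : K) :
    toricHom K v (monomial a k) = monomial (Finsupp.weight v a) k := by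
  rw [toricHom, aeval_monomial, Finsupp.weight_apply, monomial_finsupp_sum_index]
  simp [monomial_pow, algebraMap_eq]

lemma monomial_sub_monomial_mem_toricIdeal {a a' : σ →₀ ℕ}
    (h : Finsupp.weight v a = Finsupp.weight v a') :
    monomial a (1 : K) - monomial a' 1 ∈ toricIdeal K v := by
  rw [toricIdeal, RingHom.mem_ker, map_sub, toricHom_monomial, toricHom_monomial, h, sub_self]

lemma exists_ne_weight_eq_of_mem_toricIdeal {f : MvPolynomial σ K} (hf : f ∈ toricIdeal K v)
    {a : σ →₀ ℕ} (ha : a ∈ f.support) :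
    ∃ a' ∈ f.support, a' ≠ a ∧ Finsupp.weight v a' = Finsupp.weight v a := by
  classical
  by_contra! hcon
  have hcoeff := congrArg (coeff (Finsupp.weight v a)) (RingHom.mem_ker.1 hf)
  conv_lhs at hcoeff => rw [f.as_sum, map_sum]
  simp only [coeff_sum, toricHom_monomial, coeff_monomial, coeff_zero] at hcoeff
  rw [sum_eq_single a (fun a' ha' hne => if_neg (hcon a' ha' hne)) (absurd ha), if_pos rfl]
    at hcoeff
  exact mem_support_iff.1 ha hcoeff

end Toric

section Spread

lemma sq_add_sq_le_of_between {p q a b : ℕ} (hpa : p ≤ a) (haq : a ≤ q) (h : a + b = p + q) :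
    a ^ 2 + b ^ 2 ≤ p ^ 2 + q ^ 2 ∧ (a ^ 2 + b ^ 2 = p ^ 2 + q ^ 2 → a = p ∨ a = q) := by
  obtain ⟨i, rfl⟩ := Nat.exists_eq_add_of_le hpa
  obtain ⟨k, rfl⟩ := Nat.exists_eq_add_of_le haq
  obtain rfl : b = p + k := by omega
  -- `p ^ 2 + q ^ 2 = a ^ 2 + b ^ 2 + 2 * i * k`
  refine ⟨by nlinarith [Nat.zero_le (i * k)], fun he => ?_⟩
  rcases Nat.mul_eq_zero.1 (show i * k = 0 by nlinarith) with h0 | h0 <;> simp [h0]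

lemma sq_avg_add_sq_avg_le (x y : ℕ) :
    ((x + y + 1) / 2) ^ 2 + ((x + y) / 2) ^ 2 ≤ x ^ 2 + y ^ 2 ∧
      (((x + y + 1) / 2) ^ 2 + ((x + y) / 2) ^ 2 = x ^ 2 + y ^ 2 →
        x = (x + y + 1) / 2 ∨ x = (x + y) / 2) := by
  rcases le_total x y with hxy | hyx
  · obtain ⟨hle, heq⟩ := sq_add_sq_le_of_between (b := (x + y + 1) / 2)
      (show x ≤ (x + y) / 2 by omega) (show (x + y) / 2 ≤ y by omega) (by omega)
    exact ⟨by linarith, fun he => by rcases heq (by linarith) with h | h <;> omega⟩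
  · obtain ⟨hle, heq⟩ := sq_add_sq_le_of_between (b := (x + y + 1) / 2)
      (show y ≤ (x + y) / 2 by omega) (show (x + y) / 2 ≤ x by omega) (by omega)
    exact ⟨by linarith, fun he => by rcases heq (by linarith) with h | h <;> omega⟩

variable {ι : Type*}

-- When `(∑ t ∈ s, x t) ^ 2 ≤ C`, the first term is decisive and the second one breaks its ties.
def spreadWeight (C : ℕ) (s : Finset ι) (x : ι → ℕ) : ℕ :=
  (2 * C + 1) * ∑ t ∈ s, x t ^ 2 + (C - (∑ t ∈ s, x t) ^ 2)

theorem spreadWeight_avg_lt {C : ℕ} {s : Finset ι} {x y u v : ι → ℕ}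
    (hu : ∀ t ∈ s, u t = (x t + y t + 1) / 2) (hv : ∀ t ∈ s, v t = (x t + y t) / 2)
    (hC : ∀ z ∈ [x, y, u, v], (∑ t ∈ s, z t) ^ 2 ≤ C)
    (hxy : ¬ ∀ t ∈ s, y t ≤ x t ∧ x t ≤ y t + 1)
    (hyx : ¬ ∀ t ∈ s, x t ≤ y t ∧ y t ≤ x t + 1) :
    spreadWeight C s u + spreadWeight C s v < spreadWeight C s x + spreadWeight C s y := by
  simp only [List.mem_cons, List.not_mem_nil, or_false, forall_eq_or_imp, forall_eq] at hC
  obtain ⟨hCx, hCy, hCu, hCv⟩ := hC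
  have hpt : ∀ t ∈ s, u t ^ 2 + v t ^ 2 ≤ x t ^ 2 + y t ^ 2 := fun t ht => by
    rw [hu t ht, hv t ht]; exact (sq_avg_add_sq_avg_le _ _).1
  have hsq : ∑ t ∈ s, u t ^ 2 + ∑ t ∈ s, v t ^ 2 ≤
      ∑ t ∈ s, x t ^ 2 + ∑ t ∈ s, y t ^ 2 := by
    simpa only [sum_add_distrib] using sum_le_sum hpt
  unfold spreadWeight
  rcases hsq.lt_or_eq with hlt | heq
  · have := Nat.mul_le_mul_left (2 * C + 1) hlt
    rw [Nat.succ_eq_add_one, mul_add, mul_add, mul_add, mul_one] at this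
    omega
  have hM := congrArg ((2 * C + 1) * ·) heq
  simp only [mul_add] at hM
  -- Equal sums of squares force `{x t, y t} = {u t, v t}` for every `t`.
  have hxt : ∀ t ∈ s, x t = u t ∨ x t = v t := fun t ht => by
    have := (sum_eq_sum_iff_of_le hpt).1 (by simpa only [sum_add_distrib] using heq) t ht
    rw [hu t ht, hv t ht] at this ⊢
    exact (sq_avg_add_sq_avg_le _ _).2 this
  have hvx : ∀ t ∈ s, v t ≤ x t := fun t ht => by
    have := hu t ht; have := hv t ht; rcases hxt t ht with h | h <;> omega
  have hxu : ∀ t ∈ s, x t ≤ u t := fun t ht => by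
    have := hu t ht; have := hv t ht; rcases hxt t ht with h | h <;> omega
  have hsum : ∑ t ∈ s, x t + ∑ t ∈ s, y t = ∑ t ∈ s, v t + ∑ t ∈ s, u t := by
    rw [← sum_add_distrib, ← sum_add_distrib]
    exact sum_congr rfl fun t ht => by have := hu t ht; have := hv t ht; omega
  obtain ⟨hle, hcase⟩ := sq_add_sq_le_of_between (sum_le_sum hvx) (sum_le_sum hxu) hsum
  rcases hle.lt_or_eq with hlt' | heq'
  · omega
  exfalso
  rcases hcase heq' with hx | hx
  · refine hyx fun t ht => ?_
    have := (sum_eq_sum_iff_of_le hvx).1 hx.symm t ht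
    have := hu t ht; have := hv t ht; omega
  · refine hxy fun t ht => ?_
    have := (sum_eq_sum_iff_of_le hxu).1 hx t ht
    have := hu t ht; have := hv t ht; omega

end Spread

section Chains

variable {d T : ℕ}

noncomputable def expVec (j : Fin T → Fin d) : Fin d →₀ ℕ := ∑ k, Finsupp.single (j k) 1

def countBelow (j : Fin T → Fin d) (t : ℕ) : ℕ := #{k | (j k : ℕ) < t}

lemma countBelow_le (j : Fin T → Fin d) (t : ℕ) : countBelow j t ≤ T :=
  (card_filter_le _ _).trans_eq (card_fin T)

lemma countBelow_mono (j : Fin T → Fin d) : Monotone (countBelow j) := fun _ _ h =>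
  card_le_card fun k hk => by simp only [mem_filter, mem_univ, true_and] at hk ⊢; omega

lemma lt_countBelow_iff {j : Fin T → Fin d} (hj : Monotone j) (k : Fin T) (t : ℕ) :
    (k : ℕ) < countBelow j t ↔ (j k : ℕ) < t :=
  Tuple.lt_card_lt_iff_apply_lt_of_monotone (f := fun k => (j k : ℕ)) fun _ _ h => hj h

lemma countBelow_eq_of_forall_iff {j : Fin T → Fin d} {t s : ℕ} (hs : s ≤ T)
    (h : ∀ k : Fin T, (j k : ℕ) < t ↔ (k : ℕ) < s) : countBelow j t = s := by
  rw [countBelow, filter_congr fun k _ => h k, Fin.card_filter_val_lt, min_eq_right hs]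

lemma eq_of_countBelow_eq {j j' : Fin T → Fin d} (hj : Monotone j) (hj' : Monotone j')
    (h : ∀ t ≤ d, countBelow j t = countBelow j' t) : j = j' := by
  have key : ∀ {j j' : Fin T → Fin d}, Monotone j → Monotone j' →
      (∀ t ≤ d, countBelow j t = countBelow j' t) → ∀ k, j k ≤ j' k := by
    intro j j' hj hj' h k
    have hk := (lt_countBelow_iff hj' k (j' k + 1)).2 (Nat.lt_succ_self _)
    rw [← h (j' k + 1) (j' k).isLt] at hk
    exact Nat.lt_succ_iff.1 ((lt_countBelow_iff hj k _).1 hk)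
  funext k
  exact le_antisymm (key hj hj' h k) (key hj' hj (fun t ht => (h t ht).symm) k)

theorem pairSorted_iff {l m : Fin T → Fin d} (hl : Monotone l) (hm : Monotone m) :
    PairSorted l m ↔
      ∀ t ≤ d, countBelow m t ≤ countBelow l t ∧ countBelow l t ≤ countBelow m t + 1 := by
  constructor
  · rintro ⟨hlm, hml⟩ t -
    refine ⟨card_le_card fun k hk => ?_, ?_⟩
    · simp only [mem_filter, mem_univ, true_and] at hk ⊢
      exact lt_of_le_of_lt (hlm k) hk
    by_contra! hlt
    have hs := countBelow_le l t
    obtain ⟨k, hk1, hk⟩ : ∃ k : Fin T, (k : ℕ) + 1 < T ∧ (k : ℕ) + 2 = countBelow l t :=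
      ⟨⟨countBelow l t - 2, by omega⟩, by simp only; omega, by simp only; omega⟩
    have hl' : (l ⟨k + 1, hk1⟩ : ℕ) < t := (lt_countBelow_iff hl _ t).1 (by simp only; omega)
    have := (lt_countBelow_iff hm k t).2 (lt_of_le_of_lt (hml k hk1) hl')
    omega
  · intro h
    refine ⟨fun k => ?_, fun k hk => ?_⟩
    · have := (lt_countBelow_iff hm k (m k + 1)).2 (Nat.lt_succ_self _)
      exact Nat.lt_succ_iff.1 ((lt_countBelow_iff hl k _).1
        (lt_of_lt_of_le this (h (m k + 1) (m k).isLt).1))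
    · generalize hk' : (⟨k + 1, hk⟩ : Fin T) = k'
      have hval : (k' : ℕ) = k + 1 := by rw [← hk']
      have hlt := (lt_countBelow_iff hl k' (l k' + 1)).2 (Nat.lt_succ_self _)
      have hb := (h (l k' + 1) (l k').isLt).2
      exact Nat.lt_succ_iff.1 ((lt_countBelow_iff hm k (l k' + 1)).1 (by omega))

lemma pairSorted_refl {l : Fin T → Fin d} (hl : Monotone l) : PairSorted l l :=
  ⟨fun _ => le_rfl, fun _ _ => hl (Fin.mk_le_mk.2 (by omega))⟩

section OddEven

variable {nn : Fin (2 * T) → Fin d}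

lemma monotone_oddPart (h : Monotone nn) : Monotone (oddPart nn) :=
  fun _ _ hk => h (Fin.mk_le_mk.2 (by simp only [Fin.le_def] at hk; omega))

lemma monotone_evenPart (h : Monotone nn) : Monotone (evenPart nn) :=
  fun _ _ hk => h (Fin.mk_le_mk.2 (by simp only [Fin.le_def] at hk; omega))

lemma pairSorted_oddPart_evenPart (h : Monotone nn) : PairSorted (oddPart nn) (evenPart nn) :=
  ⟨fun _ => h (Fin.mk_le_mk.2 (by omega)), fun _ _ => h (Fin.mk_le_mk.2 (by simp only; omega))⟩

lemma countBelow_oddPart (h : Monotone nn) (t : ℕ) :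
    countBelow (oddPart nn) t = (countBelow nn t + 1) / 2 := by
  have := countBelow_le nn t
  refine countBelow_eq_of_forall_iff (by omega) fun k => ?_
  rw [oddPart, ← lt_countBelow_iff h]
  simp only
  omega

lemma countBelow_evenPart (h : Monotone nn) (t : ℕ) :
    countBelow (evenPart nn) t = countBelow nn t / 2 := by
  have := countBelow_le nn t
  refine countBelow_eq_of_forall_iff (by omega) fun k => ?_
  rw [evenPart, ← lt_countBelow_iff h]
  simp only
  omega

end OddEven

def sumBelow (t : ℕ) : (Fin d →₀ ℕ) →+ ℕ where
  toFun f := ∑ v ∈ ({v | (v : ℕ) < t} : Finset (Fin d)), f v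
  map_zero' := by simp
  map_add' f g := by simp [sum_add_distrib]

lemma sumBelow_expVec (j : Fin T → Fin d) (t : ℕ) : sumBelow t (expVec j) = countBelow j t := by
  have hsingle (v : Fin d) :
      sumBelow t (Finsupp.single v 1) = if (v : ℕ) < t then 1 else 0 := by
    simp only [sumBelow, AddMonoidHom.coe_mk, ZeroHom.coe_mk, Finsupp.single_apply, sum_ite_eq,
      mem_filter, mem_univ, true_and]
  simp only [expVec, map_sum, hsingle, countBelow, card_filter]

lemma eq_of_sumBelow_eq {f g : Fin d →₀ ℕ} (h : ∀ t, sumBelow t f = sumBelow t g) :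
    f = g := by
  have key : ∀ (f : Fin d →₀ ℕ) (v : Fin d), sumBelow (v + 1) f = sumBelow v f + f v := by
    intro f v
    have hs : ({u | (u : ℕ) < v + 1} : Finset (Fin d)) =
        insert v ({u | (u : ℕ) < v} : Finset (Fin d)) := by
      ext u
      simp only [mem_filter, mem_univ, true_and, mem_insert, Fin.ext_iff]
      omega
    simp only [sumBelow, AddMonoidHom.coe_mk, ZeroHom.coe_mk]
    rw [hs, sum_insert (by simp), add_comm]
  ext v
  have := key f v
  have := key g v
  have := h v
  have := h (v + 1)
  omega

lemma countBelow_eq_add_of_expVec_eq {l m : Fin T → Fin d} {nn : Fin (2 * T) → Fin d}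
    (h : expVec nn = expVec l + expVec m) (t : ℕ) :
    countBelow nn t = countBelow l t + countBelow m t := by
  rw [← sumBelow_expVec, h, map_add, sumBelow_expVec, sumBelow_expVec]

lemma expVec_oddPart_add_evenPart {nn : Fin (2 * T) → Fin d} (h : Monotone nn) :
    expVec (oddPart nn) + expVec (evenPart nn) = expVec nn := by
  refine eq_of_sumBelow_eq fun t => ?_
  rw [map_add, sumBelow_expVec, sumBelow_expVec, sumBelow_expVec, countBelow_oddPart h,
    countBelow_evenPart h]
  omega

lemma expVec_comp_perm (j : Fin T → Fin d) (σ : Equiv.Perm (Fin T)) :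
    expVec (j ∘ σ) = expVec j :=
  Equiv.sum_comp σ fun k => Finsupp.single (j k) 1

noncomputable def merge (l m : Fin T → Fin d) : Fin (2 * T) → Fin d :=
  let g := Fin.append l m ∘ Fin.cast (two_mul T)
  g ∘ Tuple.sort g

lemma monotone_merge (l m : Fin T → Fin d) : Monotone (merge l m) :=
  Tuple.monotone_sort _

lemma expVec_merge (l m : Fin T → Fin d) : expVec (merge l m) = expVec l + expVec m := by
  rw [merge, expVec_comp_perm, expVec, ← (finCongr (two_mul T)).symm.sum_comp]
  rw [Fin.sum_univ_add]
  simp only [finCongr_symm, finCongr_apply, Function.comp_apply, Fin.cast_cast, Fin.cast_eq_self,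
    Fin.append_left, Fin.append_right, expVec]

lemma countBelow_merge (l m : Fin T → Fin d) (t : ℕ) :
    countBelow (merge l m) t = countBelow l t + countBelow m t :=
  countBelow_eq_add_of_expVec_eq (expVec_merge l m) t

lemma eq_merge {l m : Fin T → Fin d} {nn : Fin (2 * T) → Fin d} (h : Monotone nn)
    (he : expVec nn = expVec l + expVec m) : nn = merge l m :=
  eq_of_countBelow_eq h (monotone_merge l m) fun t _ => by
    rw [countBelow_eq_add_of_expVec_eq he, countBelow_eq_add_of_expVec_eq (expVec_merge l m)]

lemma merge_comm (l m : Fin T → Fin d) : merge l m = merge m l :=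
  eq_merge (monotone_merge l m) (by rw [expVec_merge, add_comm])

end Chains

section SortingPairs

variable {d T n : ℕ} {b c : Fin n → ℕ} {p q : Fin n → Fin d}

lemma sum_Icc_eq_sumBelow_sub (f : Fin d →₀ ℕ) (P Q : Fin d) :
    ∑ v ∈ Icc P Q, f v = sumBelow (Q + 1) f - sumBelow P f := by
  simp only [sumBelow, AddMonoidHom.coe_mk, ZeroHom.coe_mk]
  rcases le_or_gt P Q with hPQ | hQP
  · have hsplit : ({v | (v : ℕ) < Q + 1} : Finset (Fin d)) =
        ({v | (v : ℕ) < P} : Finset (Fin d)) ∪ Icc P Q := by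
      ext v
      simp only [mem_filter, mem_univ, true_and, mem_union, mem_Icc, Fin.le_def]
      omega
    rw [hsplit, sum_union (disjoint_left.2 fun v hv hv' => by
      simp only [mem_filter, mem_univ, true_and, mem_Icc, Fin.le_def] at hv hv'; omega)]
    omega
  · rw [Icc_eq_empty_of_lt hQP, sum_empty, eq_comm, Nat.sub_eq_zero_iff_le]
    exact sum_le_sum_of_subset fun v hv => by
      simp only [mem_filter, mem_univ, true_and, Fin.lt_def] at hv hQP ⊢; omega

lemma expDeg_expVec (j : Fin T → Fin d) : expDeg (expVec j) = T := by
  have hall : ({v | (v : ℕ) < d} : Finset (Fin d)) = univ :=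
    filter_true_of_mem fun v _ => v.isLt
  calc expDeg (expVec j) = sumBelow d (expVec j) := by
        rw [expDeg, Finsupp.sum_fintype _ _ fun _ => rfl]
        simp only [sumBelow, AddMonoidHom.coe_mk, ZeroHom.coe_mk, hall]
    _ = T := by
        rw [sumBelow_expVec]
        exact countBelow_eq_of_forall_iff le_rfl fun k => iff_of_true (j k).isLt k.isLt

lemma expVec_mem_SVConfig_of_countBelow_eq {l m u : Fin T → Fin d} {e : ℕ}
    (hl : expVec l ∈ SVConfig d T n b c p q) (hm : expVec m ∈ SVConfig d T n b c p q)
    (hu : ∀ t, countBelow u t = (countBelow l t + countBelow m t + e) / 2) :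
    expVec u ∈ SVConfig d T n b c p q := by
  refine ⟨expDeg_expVec u, fun i => ?_⟩
  have hl := hl.2 i
  have hm := hm.2 i
  simp only [sum_Icc_eq_sumBelow_sub, sumBelow_expVec] at hl hm ⊢
  have h1 := hu (p i)
  have h2 := hu (q i + 1)
  rcases le_total (p i : ℕ) (q i + 1) with h | h
  · have := countBelow_mono l h; have := countBelow_mono m h
    omega
  · have := countBelow_mono l h; have := countBelow_mono m h
    omega

noncomputable def sortLow (l m : SVIdx d T n b c p q) : SVIdx d T n b c p q :=
  ⟨oddPart (merge l.1 m.1), monotone_oddPart (monotone_merge _ _),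
    expVec_mem_SVConfig_of_countBelow_eq l.2.2 m.2.2 fun t => by
      rw [countBelow_oddPart (monotone_merge _ _), countBelow_merge]⟩

noncomputable def sortHigh (l m : SVIdx d T n b c p q) : SVIdx d T n b c p q :=
  ⟨evenPart (merge l.1 m.1), monotone_evenPart (monotone_merge _ _),
    expVec_mem_SVConfig_of_countBelow_eq (e := 0) l.2.2 m.2.2 fun t => by
      rw [countBelow_evenPart (monotone_merge _ _), countBelow_merge, add_zero]⟩

variable (l m : SVIdx d T n b c p q)

lemma expVec_sortLow_add_sortHigh :
    expVec (sortLow l m).1 + expVec (sortHigh l m).1 = expVec l.1 + expVec m.1 :=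
  (expVec_oddPart_add_evenPart (monotone_merge _ _)).trans (expVec_merge _ _)

lemma pairSorted_sortLow_sortHigh : PairSorted (sortLow l m).1 (sortHigh l m).1 :=
  pairSorted_oddPart_evenPart (monotone_merge _ _)

lemma sortLow_comm : sortLow l m = sortLow m l :=
  Subtype.ext (congrArg oddPart (merge_comm _ _))

lemma sortHigh_comm : sortHigh l m = sortHigh m l :=
  Subtype.ext (congrArg evenPart (merge_comm _ _))

lemma sortLow_sortHigh_of_pairSorted (h : PairSorted l.1 m.1) :
    sortLow l m = l ∧ sortHigh l m = m := by
  have hc := (pairSorted_iff l.2.1 m.2.1).1 h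
  refine ⟨Subtype.ext (eq_of_countBelow_eq (sortLow l m).2.1 l.2.1 fun t ht => ?_),
    Subtype.ext (eq_of_countBelow_eq (sortHigh l m).2.1 m.2.1 fun t ht => ?_)⟩
  · have := hc t ht
    rw [sortLow, countBelow_oddPart (monotone_merge _ _), countBelow_merge]
    omega
  · have := hc t ht
    rw [sortHigh, countBelow_evenPart (monotone_merge _ _), countBelow_merge]
    omega

def chainWeight (j : Fin T → Fin d) : ℕ :=
  spreadWeight (((d + 1) * T) ^ 2) (range (d + 1)) (countBelow j)

lemma sq_sum_countBelow_le (j : Fin T → Fin d) :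
    (∑ t ∈ range (d + 1), countBelow j t) ^ 2 ≤ ((d + 1) * T) ^ 2 := by
  gcongr
  exact (sum_le_sum fun t _ => countBelow_le j t).trans (by simp)

theorem chainWeight_sort_lt (hlm : ¬ PairSorted l.1 m.1) (hml : ¬ PairSorted m.1 l.1) :
    chainWeight (sortLow l m).1 + chainWeight (sortHigh l m).1 <
      chainWeight l.1 + chainWeight m.1 := by
  refine spreadWeight_avg_lt (fun t _ => ?_) (fun t _ => ?_) ?_
    (fun h => hlm ((pairSorted_iff l.2.1 m.2.1).2 fun t ht => h t (by simpa [Nat.lt_succ_iff])))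
    (fun h => hml ((pairSorted_iff m.2.1 l.2.1).2 fun t ht => h t (by simpa [Nat.lt_succ_iff])))
  · rw [sortLow, countBelow_oddPart (monotone_merge _ _), countBelow_merge]
  · rw [sortHigh, countBelow_evenPart (monotone_merge _ _), countBelow_merge]
  · simp only [List.mem_cons, List.not_mem_nil, or_false]
    rintro _ (rfl | rfl | rfl | rfl) <;> exact sq_sum_countBelow_le _

end SortingPairs

section SortedMonomials

variable {d T n : ℕ} {b c : Fin n → ℕ} {p q : Fin n → Fin d}

noncomputable def varExp (j : SVIdx d T n b c p q) : Fin d →₀ ℕ := expVec j.1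

def varWeight (j : SVIdx d T n b c p q) : ℕ := chainWeight j.1

def IsSortedMonomial (a : SVIdx d T n b c p q →₀ ℕ) : Prop :=
  ∀ j ∈ a.support, ∀ j' ∈ a.support, PairSorted j.1 j'.1 ∨ PairSorted j'.1 j.1

lemma exists_pair_le_of_not_isSortedMonomial {a : SVIdx d T n b c p q →₀ ℕ}
    (h : ¬ IsSortedMonomial a) :
    ∃ j j' : SVIdx d T n b c p q, ¬ PairSorted j.1 j'.1 ∧ ¬ PairSorted j'.1 j.1 ∧
      Finsupp.single j 1 + Finsupp.single j' 1 ≤ a := by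
  simp only [IsSortedMonomial, not_forall, not_or] at h
  obtain ⟨j, hj, j', hj', hjj', hj'j⟩ := h
  have hne : j ≠ j' := fun he => hjj' (he ▸ pairSorted_refl j.2.1)
  exact ⟨j, j', hjj', hj'j, single_add_single_le_of_mem_support hne hj hj'⟩

lemma sumBelow_weight_varExp (a : SVIdx d T n b c p q →₀ ℕ) (t : ℕ) :
    sumBelow t (Finsupp.weight varExp a) = Finsupp.weight (fun j => countBelow j.1 t) a := by
  simp only [Finsupp.weight_apply, map_finsuppSum, map_nsmul, varExp, sumBelow_expVec]

lemma sumBelow_weight_varExp_eq_degree_mul (a : SVIdx d T n b c p q →₀ ℕ) :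
    sumBelow d (Finsupp.weight varExp a) = a.degree * T := by
  have hT : ∀ j : SVIdx d T n b c p q, countBelow j.1 d = T := fun j =>
    countBelow_eq_of_forall_iff le_rfl fun k => iff_of_true (j.1 k).isLt k.isLt
  rw [sumBelow_weight_varExp]
  simp only [hT, Finsupp.weight_apply, Finsupp.sum, smul_eq_mul, Finsupp.degree_apply, sum_mul]

lemma IsSortedMonomial.exists_top {a : SVIdx d T n b c p q →₀ ℕ} (ha : IsSortedMonomial a)
    (ha0 : a ≠ 0) : ∃ jm ∈ a.support, ∀ j ∈ a.support, PairSorted j.1 jm.1 := by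
  obtain ⟨jm, hjm, hmin⟩ := exists_min_image a.support
    (fun j => ∑ t ∈ range (d + 1), countBelow j.1 t) (Finsupp.support_nonempty_iff.2 ha0)
  refine ⟨jm, hjm, fun j hj => (ha j hj jm hjm).elim id fun hjmj => ?_⟩
  have hle : ∀ t ∈ range (d + 1), countBelow j.1 t ≤ countBelow jm.1 t := fun t ht =>
    ((pairSorted_iff jm.2.1 j.2.1).1 hjmj t (Nat.lt_succ_iff.1 (mem_range.1 ht))).1
  have heq := (sum_eq_sum_iff_of_le hle).1 (le_antisymm (sum_le_sum hle) (hmin j hj))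
  obtain rfl : j = jm := Subtype.ext (eq_of_countBelow_eq j.2.1 jm.2.1 fun t ht =>
    heq t (mem_range.2 (Nat.lt_succ_of_le ht)))
  exact hjmj

lemma countBelow_top_eq {a : SVIdx d T n b c p q →₀ ℕ} {jm : SVIdx d T n b c p q}
    (hjm : jm ∈ a.support) (htop : ∀ j ∈ a.support, PairSorted j.1 jm.1) {t : ℕ}
    (ht : t ≤ d) :
    countBelow jm.1 t = sumBelow t (Finsupp.weight varExp a) / a.degree := by
  set u := countBelow jm.1 t
  have hbounds : ∀ j ∈ a.support, u ≤ countBelow j.1 t ∧ countBelow j.1 t ≤ u + 1 :=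
    fun j hj => (pairSorted_iff j.2.1 jm.2.1).1 (htop j hj) t ht
  rw [sumBelow_weight_varExp, Finsupp.weight_apply, Finsupp.sum, Finsupp.degree_apply]
  simp only [smul_eq_mul]
  have hpos : 1 ≤ a jm := Nat.one_le_iff_ne_zero.2 (Finsupp.mem_support_iff.1 hjm)
  have hlow : (∑ j ∈ a.support, a j) * u ≤ ∑ j ∈ a.support, a j * countBelow j.1 t := by
    rw [sum_mul]; exact sum_le_sum fun j hj => Nat.mul_le_mul_left _ (hbounds j hj).1
  have hhigh : ∑ j ∈ a.support.erase jm, a j * countBelow j.1 t ≤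
      (∑ j ∈ a.support.erase jm, a j) * u + ∑ j ∈ a.support.erase jm, a j := by
    rw [sum_mul, ← sum_add_distrib]
    exact sum_le_sum fun j hj => by
      rw [← mul_add_one]; exact Nat.mul_le_mul_left _ (hbounds j (mem_of_mem_erase hj)).2
  have hN := add_sum_erase _ (fun j => a j) hjm
  have hS : a jm * u + ∑ j ∈ a.support.erase jm, a j * countBelow j.1 t =
      ∑ j ∈ a.support, a j * countBelow j.1 t :=
    add_sum_erase _ (fun j => a j * countBelow j.1 t) hjm
  have hNu :
      (∑ j ∈ a.support, a j) * u = a jm * u + (∑ j ∈ a.support.erase jm, a j) * u := by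
    rw [← hN, add_mul]
  refine (Nat.div_eq_of_lt_le (by rw [mul_comm]; exact hlow) ?_).symm
  rw [add_one_mul, mul_comm u]
  omega

lemma IsSortedMonomial.mono {a a' : SVIdx d T n b c p q →₀ ℕ} (ha : IsSortedMonomial a)
    (hsub : a'.support ⊆ a.support) : IsSortedMonomial a' :=
  fun j hj j' hj' => ha j (hsub hj) j' (hsub hj')

/-- Peeling off the top chain, which is determined by the image, reduces the degree. -/
theorem IsSortedMonomial.eq_of_weight_eq (hT : 0 < T) {a a' : SVIdx d T n b c p q →₀ ℕ}
    (ha : IsSortedMonomial a) (ha' : IsSortedMonomial a')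
    (h : Finsupp.weight varExp a = Finsupp.weight varExp a') : a = a' := by
  induction hN : a.degree generalizing a a' with
  | zero =>
    have hN' : a'.degree = 0 := by
      have := sumBelow_weight_varExp_eq_degree_mul a'
      rw [← h, sumBelow_weight_varExp_eq_degree_mul, hN, zero_mul, eq_comm,
        Nat.mul_eq_zero] at this
      omega
    rw [(Finsupp.degree_eq_zero_iff a).1 hN, (Finsupp.degree_eq_zero_iff a').1 hN']
  | succ N ih =>
    have hdeg : a.degree = a'.degree := Nat.eq_of_mul_eq_mul_right hT (by
      rw [← sumBelow_weight_varExp_eq_degree_mul, ← sumBelow_weight_varExp_eq_degree_mul, h])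
    have hne : ∀ {a : SVIdx d T n b c p q →₀ ℕ}, a.degree = N + 1 → a ≠ 0 := by
      rintro a ha rfl; simp at ha
    obtain ⟨jm, hjm, htop⟩ := ha.exists_top (hne hN)
    obtain ⟨jm', hjm', htop'⟩ := ha'.exists_top (hne (hdeg ▸ hN))
    obtain rfl : jm = jm' := Subtype.ext (eq_of_countBelow_eq jm.2.1 jm'.2.1 fun t ht => by
      rw [countBelow_top_eq hjm htop ht, countBelow_top_eq hjm' htop' ht, h, hdeg])
    have hle : ∀ {a : SVIdx d T n b c p q →₀ ℕ}, jm ∈ a.support →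
        Finsupp.single jm 1 ≤ a :=
      fun hj => Finsupp.single_le_iff.2 (Nat.one_le_iff_ne_zero.2 (Finsupp.mem_support_iff.1 hj))
    have hsplit := tsub_add_cancel_of_le (hle hjm)
    have hsplit' := tsub_add_cancel_of_le (hle hjm')
    have key := ih (ha.mono Finsupp.support_tsub) (ha'.mono Finsupp.support_tsub)
      (add_right_cancel (b := Finsupp.weight varExp (Finsupp.single jm 1)) (by
        rw [← map_add, ← map_add, hsplit, hsplit', h]))
      (by
        have := congrArg Finsupp.degree hsplit
        simp only [map_add, Finsupp.degree_single] at this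
        omega)
    rw [← hsplit, ← hsplit', key]

lemma exists_weight_lt_of_not_isSortedMonomial {a : SVIdx d T n b c p q →₀ ℕ}
    (h : ¬ IsSortedMonomial a) :
    ∃ a' : SVIdx d T n b c p q →₀ ℕ, Finsupp.weight varExp a' = Finsupp.weight varExp a ∧
      Finsupp.weight varWeight a' < Finsupp.weight varWeight a := by
  obtain ⟨j, j', hjj', hj'j, hle⟩ := exists_pair_le_of_not_isSortedMonomial h
  refine ⟨a - (Finsupp.single j 1 + Finsupp.single j' 1) +
    (Finsupp.single (sortLow j j') 1 + Finsupp.single (sortHigh j j') 1), ?_, ?_⟩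
  · conv_rhs => rw [← tsub_add_cancel_of_le hle]
    simp only [map_add, Finsupp.weight_single, one_smul, varExp, expVec_sortLow_add_sortHigh]
  · conv_rhs => rw [← tsub_add_cancel_of_le hle]
    simp only [map_add, Finsupp.weight_single, one_smul, varWeight]
    have := chainWeight_sort_lt j j' hjj' hj'j
    omega

theorem exists_isSortedMonomial_weight_eq (a : SVIdx d T n b c p q →₀ ℕ) :
    ∃ s, IsSortedMonomial s ∧ Finsupp.weight varExp s = Finsupp.weight varExp a ∧
      (s = a ∨ Finsupp.weight varWeight s < Finsupp.weight varWeight a) := by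
  induction hW : Finsupp.weight varWeight a using Nat.strong_induction_on generalizing a with
  | _ W ih =>
    by_cases hs : IsSortedMonomial a
    · exact ⟨a, hs, rfl, Or.inl rfl⟩
    obtain ⟨a', himg, hlt⟩ := exists_weight_lt_of_not_isSortedMonomial hs
    obtain ⟨s, hs', himg', hle⟩ := ih _ (hW ▸ hlt) a' rfl
    exact ⟨s, hs', himg'.trans himg, Or.inr (by rcases hle with rfl | hle <;> omega)⟩

end SortedMonomials

section SortingBinomials

variable {K : Type*} [Field K] {d T n : ℕ} {b c : Fin n → ℕ} {p q : Fin n → Fin d}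

variable (K) in
noncomputable def sortBinomial (l m : SVIdx d T n b c p q) :
    MvPolynomial (SVIdx d T n b c p q) K :=
  X l * X m - X (sortLow l m) * X (sortHigh l m)

lemma mem_sortingSet_iff {g : MvPolynomial (SVIdx d T n b c p q) K} :
    g ∈ sortingSet K d T n b c p q ↔ ∃ l m, g = sortBinomial K l m := by
  constructor
  · rintro ⟨l, m, nn, hnn, hsum, hodd, heven, rfl⟩
    obtain rfl := eq_merge hnn hsum
    exact ⟨l, m, rfl⟩
  · rintro ⟨l, m, rfl⟩
    exact ⟨l, m, merge l.1 m.1, monotone_merge _ _, expVec_merge _ _, (sortLow l m).2,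
      (sortHigh l m).2, rfl⟩

lemma sortBinomial_comm (l m : SVIdx d T n b c p q) : sortBinomial K l m = sortBinomial K m l := by
  rw [sortBinomial, sortBinomial, sortLow_comm, sortHigh_comm, mul_comm (X l)]

lemma sortBinomial_eq_zero_of_pairSorted {l m : SVIdx d T n b c p q} (h : PairSorted l.1 m.1) :
    sortBinomial K l m = 0 := by
  obtain ⟨hlow, hhigh⟩ := sortLow_sortHigh_of_pairSorted l m h
  rw [sortBinomial, hlow, hhigh, sub_self]

lemma sortBinomial_mem_toricIdeal (l m : SVIdx d T n b c p q) :
    sortBinomial K l m ∈ toricIdeal K varExp := by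
  rw [sortBinomial, X_mul_X, X_mul_X]
  refine monomial_sub_monomial_mem_toricIdeal _ ?_
  simp only [map_add, Finsupp.weight_single, one_smul, varExp, expVec_sortLow_add_sortHigh]

variable {r : (SVIdx d T n b c p q →₀ ℕ) → (SVIdx d T n b c p q →₀ ℕ) → Prop}

lemma isLeadingMonomial_sortBinomial_iff [Std.Total r]
    (hr : ∀ a a', r a a' → Finsupp.weight varWeight a ≤ Finsupp.weight varWeight a')
    {l m : SVIdx d T n b c p q}
    (hlm : ¬ PairSorted l.1 m.1) (hml : ¬ PairSorted m.1 l.1)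
    (e : SVIdx d T n b c p q →₀ ℕ) :
    IsLeadingMonomial r (sortBinomial K l m) e ↔ e = Finsupp.single l 1 + Finsupp.single m 1 := by
  rw [sortBinomial, X_mul_X, X_mul_X]
  refine isLeadingMonomial_monomial_sub_monomial hr ?_ e
  simp only [map_add, Finsupp.weight_single, one_smul, varWeight]
  exact chainWeight_sort_lt l m hlm hml

lemma isLeadingMonomial_sortBinomial [Std.Total r]
    (hr : ∀ a a', r a a' → Finsupp.weight varWeight a ≤ Finsupp.weight varWeight a')
    {l m : SVIdx d T n b c p q} {e : SVIdx d T n b c p q →₀ ℕ}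
    (h : IsLeadingMonomial r (sortBinomial K l m) e) :
    ¬ PairSorted l.1 m.1 ∧ ¬ PairSorted m.1 l.1 ∧
      e = Finsupp.single l 1 + Finsupp.single m 1 := by
  have hne : sortBinomial K l m ≠ 0 := fun h0 => by simp [h0, IsLeadingMonomial] at h
  have hlm : ¬ PairSorted l.1 m.1 := fun hs => hne (sortBinomial_eq_zero_of_pairSorted hs)
  have hml : ¬ PairSorted m.1 l.1 := fun hs =>
    hne (by rw [sortBinomial_comm, sortBinomial_eq_zero_of_pairSorted hs])
  exact ⟨hlm, hml, (isLeadingMonomial_sortBinomial_iff hr hlm hml e).1 h⟩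

/-- The leading monomial of a binomial in the toric ideal is never sorted, since the sorted
monomial of a fibre has the least weight in it. -/
theorem exists_pair_le_of_isLeadingMonomial (hT : 0 < T)
    (hr : ∀ a a', r a a' → Finsupp.weight varWeight a ≤ Finsupp.weight varWeight a')
    {f : MvPolynomial (SVIdx d T n b c p q) K} (hf : f ∈ toricIdeal K varExp)
    {mf : SVIdx d T n b c p q →₀ ℕ} (hmf : IsLeadingMonomial r f mf) :
    ∃ l m : SVIdx d T n b c p q, ¬ PairSorted l.1 m.1 ∧ ¬ PairSorted m.1 l.1 ∧
      Finsupp.single l 1 + Finsupp.single m 1 ≤ mf := by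
  refine exists_pair_le_of_not_isSortedMonomial fun hs => ?_
  obtain ⟨a, ha, hne, himg⟩ := exists_ne_weight_eq_of_mem_toricIdeal _ hf hmf.1
  obtain ⟨s, hs', himg', hlt⟩ := exists_isSortedMonomial_weight_eq a
  obtain rfl := hs'.eq_of_weight_eq hT hs (himg'.trans himg)
  have := hr _ _ (hmf.2 a ha)
  rcases hlt with rfl | hlt
  · exact hne rfl
  · omega

theorem isGroebnerBasis_sortingSet [Std.Total r] (hT : 0 < T)
    (hr : ∀ a a', r a a' → Finsupp.weight varWeight a ≤ Finsupp.weight varWeight a') :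
    IsGroebnerBasis r (toricIdeal K varExp) (sortingSet K d T n b c p q) := by
  refine ⟨fun g hg => ?_, fun f hf _ mf hmf => ?_⟩
  · obtain ⟨l, m, rfl⟩ := mem_sortingSet_iff.1 hg
    exact sortBinomial_mem_toricIdeal l m
  · obtain ⟨l, m, hlm, hml, hle⟩ := exists_pair_le_of_isLeadingMonomial hT hr hf hmf
    exact ⟨_, mem_sortingSet_iff.2 ⟨l, m, rfl⟩, _,
      (isLeadingMonomial_sortBinomial_iff hr hlm hml _).2 rfl, hle⟩

theorem isReducedGroebnerBasis_sortingSet [Std.Total r] (hT : 0 < T)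
    (hr : ∀ a a', r a a' → Finsupp.weight varWeight a ≤ Finsupp.weight varWeight a') :
    IsReducedGroebnerBasis r (toricIdeal K varExp) (sortingSet K d T n b c p q) := by
  refine ⟨isGroebnerBasis_sortingSet hT hr, fun g hg e he => ?_,
    fun g hg g' hg' hne mo hmo e he hle => ?_⟩
  · obtain ⟨l, m, rfl⟩ := mem_sortingSet_iff.1 hg
    obtain ⟨-, -, rfl⟩ := isLeadingMonomial_sortBinomial hr he
    rw [sortBinomial, X_mul_X, X_mul_X] at he ⊢
    exact coeff_of_isLeadingMonomial_monomial_sub_monomial he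
  obtain ⟨l, m, rfl⟩ := mem_sortingSet_iff.1 hg
  obtain ⟨l', m', rfl⟩ := mem_sortingSet_iff.1 hg'
  obtain ⟨hlm', hml', rfl⟩ := isLeadingMonomial_sortBinomial hr he
  rw [sortBinomial, X_mul_X, X_mul_X] at hmo
  rcases eq_or_eq_of_mem_support_monomial_sub_monomial hmo with rfl | rfl
  · rcases single_add_single_le_iff.1 hle with ⟨rfl, rfl⟩ | ⟨rfl, rfl⟩
    · exact hne rfl
    · exact hne (sortBinomial_comm _ _)
  · have := pairSorted_sortLow_sortHigh l m
    rcases single_add_single_le_iff.1 hle with ⟨rfl, rfl⟩ | ⟨rfl, rfl⟩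
    · exact hlm' this
    · exact hml' this

lemma leadingMonomials_sortingSet [Std.Total r]
    (hr : ∀ a a', r a a' → Finsupp.weight varWeight a ≤ Finsupp.weight varWeight a') :
    {s | ∃ g ∈ sortingSet K d T n b c p q, ∃ e,
        IsLeadingMonomial r g e ∧ s = monomial e 1} =
      {s : MvPolynomial (SVIdx d T n b c p q) K | ∃ l m, l ≠ m ∧ ¬ PairSorted l.1 m.1 ∧
        ¬ PairSorted m.1 l.1 ∧ s = X l * X m} := by
  ext s
  constructor
  · rintro ⟨g, hg, e, he, rfl⟩
    obtain ⟨l, m, rfl⟩ := mem_sortingSet_iff.1 hg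
    obtain ⟨hlm, hml, rfl⟩ := isLeadingMonomial_sortBinomial hr he
    refine ⟨l, m, ?_, hlm, hml, (X_mul_X l m).symm⟩
    rintro rfl
    exact hlm (pairSorted_refl l.2.1)
  · rintro ⟨l, m, -, hlm, hml, rfl⟩
    exact ⟨_, mem_sortingSet_iff.2 ⟨l, m, rfl⟩, _,
      (isLeadingMonomial_sortBinomial_iff hr hlm hml _).2 rfl, X_mul_X l m⟩

end SortingBinomials

end SegreVeronese

open SegreVeronese

theorem segre_veronese_sortingGB_general
    {K : Type*} [Field K] (d τ n : ℕ) (hτ : 2 ≤ τ)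
    (b c : Fin n → ℕ) (p q : Fin n → Fin d) :
    ∃ r, IsMonomialOrder r ∧
      IsReducedGroebnerBasis r
        (toricIdeal K (fun j : SVIdx d τ n b c p q => ∑ k, Finsupp.single (j.1 k) 1))
        (sortingSet K d τ n b c p q) ∧
      ∃ S : Set (MvPolynomial (SVIdx d τ n b c p q) K),
        (∀ s ∈ S, ∃ l m : SVIdx d τ n b c p q, l ≠ m ∧
          ¬ PairSorted l.1 m.1 ∧ ¬ PairSorted m.1 l.1 ∧
          s = MvPolynomial.X l * MvPolynomial.X m) ∧
        initialIdeal r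
            (toricIdeal K (fun j : SVIdx d τ n b c p q => ∑ k, Finsupp.single (j.1 k) 1)) =
          Ideal.span S := by
  let _ : LinearOrder (SVIdx d τ n b c p q) :=
    LinearOrder.lift' (fun j => toLex j.1) fun _ _ h => Subtype.ext (toLex_inj.1 h)
  let w : SVIdx d τ n b c p q → ℕ := varWeight
  have hmono := isMonomialOrder_weightLex w
  have := hmono.1
  have hr : ∀ a a', weightLex w a a' → Finsupp.weight w a ≤ Finsupp.weight w a' :=
    fun _ _ => weight_le_of_weightLex
  have hGB := isReducedGroebnerBasis_sortingSet (K := K) (by omega) hr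
  exact ⟨_, hmono, hGB, _, fun s hs => hs,
    hGB.1.initialIdeal_eq_span.trans
      (congrArg Ideal.span (leadingMonomials_sortingSet (K := K) hr))⟩

/-- Theorem `sortingGB`: for the Segre–Veronese configuration there is a
monomial order for which the sorting binomials form the reduced Gröbner basis of the toric
ideal, and the initial ideal is generated by squarefree quadratic (nonsorted) monomials. -/
theorem segre_veronese_sortingGB
    {K : Type*} [Field K] (d τ n : ℕ) (hτ : 2 ≤ τ)
    (b c : Fin n → ℕ) (p q : Fin n → Fin d)
    (hcb : ∀ i, c i ≤ b i) (hpq : ∀ i, p i ≤ q i) :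
    ∃ r, IsMonomialOrder r ∧
      IsReducedGroebnerBasis r
        (toricIdeal K (fun j : SVIdx d τ n b c p q => ∑ k, Finsupp.single (j.1 k) 1))
        (sortingSet K d τ n b c p q) ∧
      ∃ S : Set (MvPolynomial (SVIdx d τ n b c p q) K),
        (∀ s ∈ S, ∃ l m : SVIdx d τ n b c p q, l ≠ m ∧
          ¬ PairSorted l.1 m.1 ∧ ¬ PairSorted m.1 l.1 ∧
          s = MvPolynomial.X l * MvPolynomial.X m) ∧
        initialIdeal r
            (toricIdeal K (fun j : SVIdx d τ n b c p q => ∑ k, Finsupp.single (j.1 k) 1)) =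
          Ideal.span S :=
  segre_veronese_sortingGB_general d τ n hτ b c p q
end
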